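/- arXiv:math/0504523 — 2 statements merged into one kernel-verified Lean document; each statement's English description precedes it below -/
import Mathlib

section
/- Let V be a vector space of finite dimension r over a field E, and let B ⊆ End_E(V) be a semisimple E-subalgebra containing Id_V with B ≠ End_E(V). Then there exists a proper E-vector subspace W of V such that no b ∈ B satisfies b(V) = W. -/
/-!
If every subspace were the image of some `b ∈ B`, then every line `E ∙ v` would be such an
image, so anything commuting with `B` would preserve every line and hence be a scalar. The
centralizer of `B` would then be `E`, and by the double centralizer theorem for the semisimple
algebra `B` (a consequence of Jacobson density), `B = End_E(V)`.
-/

open Module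

theorem LinearMap.exists_eq_smul_id_of_forall_mem_span_singleton {E V : Type*} [Field E]
    [AddCommGroup V] [Module E V] {f : End E V} (h : ∀ v, f v ∈ Submodule.span E {v}) :
    ∃ a : E, f = a • 1 :=
  exists_eq_smul_id_of_forall_notLinearIndependent fun v hv ↦ by
    obtain ⟨a, ha⟩ := Submodule.mem_span_singleton.mp (h v)
    have := LinearIndependent.pair_iff.mp hv a (-1) (by rw [ha, neg_one_smul, add_neg_cancel])
    exact one_ne_zero (neg_eq_zero.mp this.2)

namespace Subalgebra

variable {E V : Type*} [Field E] [AddCommGroup V] [Module E V]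

theorem centralizer_centralizer_eq_self [FiniteDimensional E V] (B : Subalgebra E (End E V))
    [IsSemisimpleRing B] :
    centralizer E (centralizer E (B : Set (End E V)) : Set (End E V)) = B := by
  refine le_antisymm (fun g hg ↦ ?_) (le_centralizer_centralizer E)
  have : Module.Finite (End B V) V := .of_restrictScalars_finite E _ _
  let f : End (End B V) V :=
    { toFun := g
      map_add' := map_add g
      map_smul' := fun c v ↦ by
        have hc : c.restrictScalars E ∈ centralizer E (B : Set (End E V)) := fun b hb ↦
          LinearMap.ext fun v ↦ (c.map_smul ⟨b, hb⟩ v).symm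
        exact (LinearMap.congr_fun (hg _ hc) v).symm }
  obtain ⟨b, hb⟩ := Module.Finite.toModuleEnd_moduleEnd_surjective f
  have hbg : (b : End E V) = g := LinearMap.ext fun v ↦ LinearMap.congr_fun hb v
  exact hbg ▸ b.2

theorem eq_top_of_centralizer_eq_bot [FiniteDimensional E V] {B : Subalgebra E (End E V)}
    [IsSemisimpleRing B] (h : centralizer E (B : Set (End E V)) = ⊥) : B = ⊤ := by
  rw [← centralizer_centralizer_eq_self B, h]
  exact (centralizer_eq_top_iff_subset E).mpr fun _ hx ↦ (bot_le : ⊥ ≤ center E _) hx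

theorem centralizer_eq_bot_of_forall_range_eq_span_singleton {B : Subalgebra E (End E V)}
    (h : ∀ v : V, ∃ b ∈ B, LinearMap.range b = Submodule.span E {v}) :
    centralizer E (B : Set (End E V)) = ⊥ := by
  refine eq_bot_iff.mpr fun c hc ↦ ?_
  suffices ∀ v, c v ∈ Submodule.span E {v} by
    obtain ⟨a, rfl⟩ := LinearMap.exists_eq_smul_id_of_forall_mem_span_singleton this
    exact Algebra.mem_bot.mpr ⟨a, Algebra.algebraMap_eq_smul_one a⟩
  intro v
  obtain ⟨b, hb, hrange⟩ := h v
  obtain ⟨u, rfl⟩ : v ∈ LinearMap.range b := hrange ▸ Submodule.mem_span_singleton_self v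
  rw [← hrange, ← Module.End.mul_apply, ← hc b hb]
  exact LinearMap.mem_range_self b (c u)

end Subalgebra

/-- Let `V` be a vector space of finite dimension over a field `E`, and `B ⊆ End_E(V)` a
semisimple `E`-subalgebra containing `Id_V` with `B ≠ End_E(V)`.  Then there exists a proper
`E`-subspace `W` of `V` such that no `b ∈ B` satisfies `b(V) = W`. -/
theorem exists_subspace_not_an_image (E V : Type) [Field E] [AddCommGroup V] [Module E V]
    [FiniteDimensional E V] (B : Subalgebra E (Module.End E V))
    (hss : IsSemisimpleRing B) (hB : B ≠ ⊤) :
    ∃ W : Submodule E V, W ≠ ⊤ ∧ ∀ b ∈ B, LinearMap.range b ≠ W := by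
  by_contra! hall
  have hlines (v : V) : ∃ b ∈ B, LinearMap.range b = Submodule.span E {v} := by
    by_cases htop : Submodule.span E {v} = ⊤
    · exact ⟨1, B.one_mem, htop ▸ LinearMap.range_id⟩
    · exact hall _ htop
  exact hB (Subalgebra.eq_top_of_centralizer_eq_bot
    (Subalgebra.centralizer_eq_bot_of_forall_range_eq_span_singleton hlines))
end

section
/- Let F/E be a quadratic field extension of characteristic-zero fields with nontrivial E-automorphism σ, and fix i ∈ F with σ(i) = −i and i² = −a for some nonzero a ∈ E. Let D = (−a,−b / E) be the quaternion E-algebra with generators i, j satisfying i² = −a, j² = −b, ji = −ij, and standard conjugation q ↦ q̄. Define the quaternionic Hermitian form φ_D : D × D → D by φ_D(q₁,q₂) = q₁·(q₂)̄. Then the group of F-linear automorphisms of D (viewed as a left F-vector space F ⊕ F·j) preserving φ_D is exactly the set of right multiplications {R(q) : q ∈ D, q·q̄ = 1}, where R(q)(d) = d·q. -/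
open Quaternion

/-!
Preserving `φ(x, y) = x * star y` already forces `u` to be right multiplication by `q := u 1`:
`φ(1, 1)` gives `q * star q = 1`, and since quaternions are star-normal also `star q * q = 1`,
so `u x = (u x * star q) * q = φ(x, 1) * q = x * q`. Conversely `x * q * star (y * q) =
x * (q * star q) * star y`.
-/

section StarMonoid

variable {A : Type*} [Monoid A] [StarMul A]

theorem mul_mul_star_mul_of_mul_star_eq_one {q : A} (hq : q * star q = 1) (x y : A) :
    x * q * star (y * q) = x * star y := by
  rw [star_mul, ← mul_assoc, mul_assoc x, hq, mul_one]

theorem apply_eq_mul_apply_one_of_mul_star_apply {f : A → A}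
    (hf : ∀ x y, f x * star (f y) = x * star y) [IsStarNormal (f 1)] (x : A) :
    f x = x * f 1 := by
  have hunit : star (f 1) * f 1 = 1 := by
    simpa only [star_comm_self', star_one, mul_one] using hf 1 1
  calc f x = f x * star (f 1) * f 1 := by rw [mul_assoc, hunit, mul_one]
    _ = x * f 1 := by rw [hf, star_one, mul_one]

end StarMonoid

theorem aut_of_quaternionic_hermitian_form_general (E : Type) [Field E] (a b : E)
    (u : ℍ[E, -a, -b] →ₗ[E] ℍ[E, -a, -b]) :
    (∀ q₁ q₂ : ℍ[E, -a, -b], u q₁ * star (u q₂) = q₁ * star q₂) ↔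
      ∃ q : ℍ[E, -a, -b], q * star q = 1 ∧ ∀ d, u d = d * q := by
  constructor
  · intro h
    exact ⟨u 1, by simpa only [star_one, mul_one] using h 1 1,
      apply_eq_mul_apply_one_of_mul_star_apply h⟩
  · rintro ⟨q, hq, hu⟩ q₁ q₂
    simpa only [hu] using mul_mul_star_mul_of_mul_star_eq_one hq q₁ q₂

/-- Let `F = E(i)` be a quadratic extension of a characteristic-zero field `E` with
`i² = −a` (so `−a` is not a square in `E`), and let `D = (−a,−b/E)` be the quaternion algebra,
realized as `ℍ[E, -a, -b]`, viewed as a left `F`-vector space `F ⊕ F·j`; here `F ⊂ D` is the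
set of quaternions `⟨x, y, 0, 0⟩ = x + y·i`.  Let `φ_D(q₁,q₂) = q₁·conj(q₂)`.  Then an
`F`-linear automorphism `u` of `D` preserves `φ_D` if and only if `u` is right multiplication
`R(q) : d ↦ d·q` by some `q ∈ D` with `q·conj(q) = 1`. -/
theorem aut_of_quaternionic_hermitian_form (E : Type) [Field E] [CharZero E] (a b : E)
    (ha : a ≠ 0) (hb : b ≠ 0) (hquad : ∀ x : E, x ^ 2 ≠ -a)
    (u : ℍ[E, -a, -b] →ₗ[E] ℍ[E, -a, -b]) (hbij : Function.Bijective u)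
    (hFlin : ∀ (x y : E) (d : ℍ[E, -a, -b]),
      u ((⟨x, y, 0, 0⟩ : ℍ[E, -a, -b]) * d) = (⟨x, y, 0, 0⟩ : ℍ[E, -a, -b]) * u d) :
    (∀ q₁ q₂ : ℍ[E, -a, -b], u q₁ * star (u q₂) = q₁ * star q₂) ↔
      ∃ q : ℍ[E, -a, -b], q * star q = 1 ∧ ∀ d, u d = d * q :=
  aut_of_quaternionic_hermitian_form_general E a b u
end
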